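/- Let n ≥ 3 and a > 1 be integers, and let P_n(a) be the largest divisor of Φ_n(a) coprime to n. Then P_n(a) > 2^(√(n/2) − log₂ n − 2). -/

import Mathlib

/-!
Write `Φ_n(a) = P R`. A prime `p ∣ R` divides `n`, and then `p ^ 2 ∤ Φ_n(a)`: reducing modulo `p`
shows `a ^ (n / p) ≡ 1 [ZMOD p]`, and `Φ_n(a)` divides `1 + b + ⋯ + b ^ (p - 1)` with
`b = a ^ (n / p)`, which is `p` modulo `p ^ 2` (for `p = 2`, `n` is then a power of `2` other than
`2`, so `b` is an odd square). So `R` is squarefree, hence `R ∣ n`. On the other side, Möbius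
inversion gives `Φ_n(a) = a ^ φ(n) ∏_{d ∣ n} (1 - a⁻ᵈ) ^ μ(n / d) ≥ a ^ φ(n) ∏_{d ∣ n} (1 - 2⁻ᵈ)`,
and the last product exceeds `1 / 4`. Thus `P ≥ Φ_n(a) / n > 2 ^ φ(n) / (4 n)`, and
`φ(n) ≥ √(n / 2)`.
-/

open Polynomial Finset
open scoped Nat ArithmeticFunction.Moebius

namespace Nat

lemma le_totient_sq_of_odd {m : ℕ} (hm : Odd m) : m ≤ φ m ^ 2 := by
  induction m using Nat.recOnPrimePow with
  | zero => simp
  | one => simp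
  | prime_pow_mul a p k hp hpa hk ih =>
    obtain ⟨hpk, ha⟩ := Nat.odd_mul.mp hm
    have hp3 : 3 ≤ p := by
      have : p ≠ 2 := by
        rintro rfl; exact Nat.not_even_iff_odd.2 hpk (Nat.even_pow.2 ⟨even_two, hk.ne'⟩)
      have := hp.two_le; omega
    rw [totient_mul ((hp.coprime_iff_not_dvd.2 hpa).pow_left k), mul_pow]
    refine Nat.mul_le_mul ?_ (ih ha)
    obtain ⟨j, rfl⟩ : ∃ j, k = j + 1 := ⟨k - 1, by omega⟩
    have hp_le : p ≤ (p - 1) ^ 2 := by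
      obtain ⟨q, rfl⟩ : ∃ q, p = q + 3 := ⟨p - 3, by omega⟩
      simp only [show q + 3 - 1 = q + 2 by omega]; nlinarith
    rw [totient_prime_pow_succ hp, mul_pow, pow_succ, ← pow_mul]
    have : p ^ j ≤ p ^ (j * 2) := Nat.pow_le_pow_right hp.pos (by omega)
    exact Nat.mul_le_mul this hp_le

lemma le_two_mul_totient_sq (n : ℕ) : n ≤ 2 * φ n ^ 2 := by
  rcases eq_or_ne n 0 with rfl | hn
  · simp
  obtain ⟨k, m, hm, rfl⟩ := exists_eq_two_pow_mul_odd hn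
  rw [totient_mul ((Nat.coprime_two_left.2 hm).pow_left k), mul_pow, ← mul_assoc]
  refine Nat.mul_le_mul ?_ (le_totient_sq_of_odd hm)
  rcases k with _ | j
  · simp
  · rw [totient_prime_pow_succ prime_two, pow_succ]
    have := Nat.one_le_two_pow (n := j)
    norm_num; nlinarith

lemma sqrt_div_two_le_totient (n : ℕ) : √((n : ℝ) / 2) ≤ φ n :=
  Real.sqrt_le_iff.2 ⟨by positivity, by
    have : (n : ℝ) ≤ 2 * (φ n : ℝ) ^ 2 := by exact_mod_cast le_two_mul_totient_sq n
    linarith⟩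

end Nat

namespace Real

lemma exp_neg_mul_log_four_le_one_sub {t : ℝ} (h0 : 0 ≤ t) (h1 : t ≤ 1 / 2) :
    exp (-(t * log 4)) ≤ 1 - t := by
  have hchord := convexOn_exp.2 (Set.mem_univ 0) (Set.mem_univ (-log 2))
    (by linarith : (0 : ℝ) ≤ 1 - 2 * t) (by linarith : 0 ≤ 2 * t) (by ring)
  have hlog4 : log 4 = 2 * log 2 := by
    rw [show (4 : ℝ) = 2 ^ 2 by norm_num, log_pow, Nat.cast_ofNat]
  simp only [smul_eq_mul, exp_zero, exp_neg, exp_log two_pos] at hchord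
  calc exp (-(t * log 4)) = exp ((1 - 2 * t) * 0 + 2 * t * -log 2) := by rw [hlog4]; ring_nf
    _ ≤ (1 - 2 * t) * 1 + 2 * t * 2⁻¹ := hchord
    _ = 1 - t := by ring

lemma one_div_four_lt_prod_one_sub {ι : Type*} (s : Finset ι) {t : ι → ℝ}
    (h0 : ∀ i ∈ s, 0 ≤ t i) (h1 : ∀ i ∈ s, t i ≤ 1 / 2) (hsum : ∑ i ∈ s, t i < 1) :
    1 / 4 < ∏ i ∈ s, (1 - t i) := by
  have hlog4 : 0 < log 4 := log_pos (by norm_num)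
  calc 1 / 4 = exp (-(1 * log 4)) := by rw [one_mul, exp_neg, exp_log (by norm_num), one_div]
    _ < exp (-((∑ i ∈ s, t i) * log 4)) := by gcongr
    _ = ∏ i ∈ s, exp (-(t i * log 4)) := by rw [← exp_sum, sum_mul, sum_neg_distrib]
    _ ≤ ∏ i ∈ s, (1 - t i) := Finset.prod_le_prod (fun i _ ↦ (exp_pos _).le)
        fun i hi ↦ exp_neg_mul_log_four_le_one_sub (h0 i hi) (h1 i hi)

end Real

lemma Nat.sum_pow_divisors_lt_one {x : ℝ} (h0 : 0 < x) (h1 : x ≤ 1 / 2) (n : ℕ) :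
    ∑ d ∈ n.divisors, x ^ d < 1 := by
  calc ∑ d ∈ n.divisors, x ^ d ≤ ∑ d ∈ Ico 1 (n + 1), x ^ d :=
        sum_le_sum_of_subset_of_nonneg
          (fun d hd ↦ mem_Ico.2 ⟨pos_of_mem_divisors hd, lt_succ_of_le (divisor_le hd)⟩)
          fun _ _ _ ↦ by positivity
    _ < ∑ d ∈ Ico 1 (n + 1), x ^ d + x ^ (n + 1) := lt_add_of_pos_right _ (by positivity)
    _ = ∑ d ∈ Ico 1 (n + 2), x ^ d := (sum_Ico_succ_top (by omega) _).symm
    _ ≤ x ^ 1 / (1 - x) := geom_sum_Ico_le_of_lt_one h0.le (by linarith)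
    _ ≤ 1 := by rw [pow_one, div_le_one (by linarith)]; linarith

lemma Polynomial.cyclotomic_eval_eq_pow_totient_mul_prod {x : ℝ} (hx : 1 < x) {n : ℕ}
    (hn : 0 < n) : (cyclotomic n ℝ).eval x =
      x ^ φ n * ∏ i ∈ n.divisorsAntidiagonal, (1 - (x ^ i.2)⁻¹) ^ μ i.1 := by
  have hx0 : 0 < x := by linarith
  have hinv (d : ℕ) (hd : 0 < d) : 1 - (x ^ d)⁻¹ ≠ 0 :=
    (sub_pos.2 (inv_lt_one_of_one_lt₀ (one_lt_pow₀ hx hd.ne'))).ne'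
  -- Möbius inversion of `∏_{d ∣ N} Φ_d(x) / x ^ φ d = (x ^ N - 1) / x ^ N`
  have hinversion := (ArithmeticFunction.prod_eq_iff_prod_pow_moebius_eq_of_nonzero
    (f := fun d ↦ (cyclotomic d ℝ).eval x / x ^ φ d) (g := fun d ↦ 1 - (x ^ d)⁻¹)
    (fun d _ ↦ div_ne_zero (cyclotomic_pos' d hx).ne' (by positivity)) hinv).1 (fun N hN ↦ by
      rw [prod_div_distrib, ← eval_prod, prod_cyclotomic_eq_X_pow_sub_one hN,
        prod_pow_eq_pow_sum, Nat.sum_totient]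
      simp only [eval_sub, eval_pow, eval_X, eval_one]
      field_simp) n hn
  rw [hinversion, mul_div_cancel₀ _ (by positivity)]

lemma Polynomial.pow_totient_div_four_lt_cyclotomic_eval {x : ℝ} (hx : 2 ≤ x) {n : ℕ}
    (hn : 0 < n) : x ^ φ n / 4 < (cyclotomic n ℝ).eval x := by
  have hx0 : 0 < x := by linarith
  have hinv_le {d : ℕ} (hd : 0 < d) : (x ^ d)⁻¹ ≤ 1 / 2 := by
    rw [one_div]
    exact inv_anti₀ two_pos (hx.trans (le_self_pow₀ (by linarith) hd.ne'))
  have hterm_pos (i : ℕ × ℕ) (hi : i ∈ n.divisorsAntidiagonal) : 0 < 1 - (x ^ i.2)⁻¹ := by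
    have := hinv_le (Nat.pos_of_mem_divisors (Nat.snd_mem_divisors_of_mem_antidiagonal hi))
    linarith
  calc x ^ φ n / 4 < x ^ φ n * ∏ d ∈ n.divisors, (1 - (x ^ d)⁻¹) := by
        rw [div_eq_mul_one_div]
        gcongr
        refine Real.one_div_four_lt_prod_one_sub _ (fun _ _ ↦ by positivity)
          (fun d hd ↦ hinv_le (Nat.pos_of_mem_divisors hd)) ?_
        simpa only [← inv_pow] using Nat.sum_pow_divisors_lt_one (inv_pos.2 hx0)
          (by simpa using hinv_le one_pos) n
    _ = x ^ φ n * ∏ i ∈ n.divisorsAntidiagonal, (1 - (x ^ i.2)⁻¹) := by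
        rw [Nat.prod_divisorsAntidiagonal' (fun _ d ↦ 1 - (x ^ d)⁻¹)]
    _ ≤ x ^ φ n * ∏ i ∈ n.divisorsAntidiagonal, (1 - (x ^ i.2)⁻¹) ^ μ i.1 := by
        gcongr _ * ?_
        refine Finset.prod_le_prod (fun i hi ↦ (hterm_pos i hi).le) fun i hi ↦ ?_
        -- `0 < y ≤ 1` and `μ ≤ 1` give `y ≤ y ^ μ`
        simpa using zpow_le_zpow_right_of_le_one₀ (hterm_pos i hi) (by simp; positivity)
          (abs_le.1 ArithmeticFunction.abs_moebius_le_one).2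
    _ = (cyclotomic n ℝ).eval x := (cyclotomic_eval_eq_pow_totient_mul_prod (by linarith) hn).symm

lemma Polynomial.cyclotomic_mul_dvd_geom_sum {R : Type*} [CommRing R] [IsDomain R] {m k : ℕ}
    (hm : 0 < m) (hk : 1 < k) : cyclotomic (m * k) R ∣ ∑ i ∈ range k, (X ^ m) ^ i := by
  have hmem : m ∈ (m * k).properDivisors :=
    Nat.mem_properDivisors.2 ⟨dvd_mul_right m k, lt_mul_right hm hk⟩
  have hne : (X ^ m - 1 : R[X]) ≠ 0 := by simpa using X_pow_sub_C_ne_zero hm (1 : R)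
  rw [← mul_dvd_mul_iff_left hne, mul_comm (X ^ m - 1) (∑ i ∈ range k, _), geom_sum_mul, ← pow_mul]
  exact X_pow_sub_one_mul_cyclotomic_dvd_X_pow_sub_one_of_dvd R hmem

lemma Int.sq_not_dvd_geom_sum_of_odd_prime {p : ℕ} (hp : p.Prime) (hodd : Odd p) {b : ℤ}
    (hb : (p : ℤ) ∣ b - 1) : ¬ (p : ℤ) ^ 2 ∣ ∑ i ∈ Finset.range p, b ^ i := by
  have hpb : ¬ (p : ℤ) ∣ b := fun h ↦
    hp.one_lt.ne' (Int.natCast_dvd_ofNat.1 (by simpa using (dvd_sub h hb)) |> Nat.dvd_one.1)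
  have hone := emultiplicity_geom_sum₂_eq_one (Nat.prime_iff_prime_int.1 hp) hodd hb hpb
  simp only [one_pow, mul_one] at hone
  rw [pow_dvd_iff_le_emultiplicity, hone]
  norm_num

lemma Polynomial.isPrimitiveRoot_of_dvd_cyclotomic_eval {p k m : ℕ} [Fact p.Prime]
    (hpm : ¬ p ∣ m) {a : ℤ} (hdvd : (p : ℤ) ∣ (cyclotomic (p ^ k * m) ℤ).eval a) :
    IsPrimitiveRoot (a : ZMod p) m := by
  have : NeZero (m : ZMod p) := ⟨by rwa [Ne, ZMod.natCast_eq_zero_iff]⟩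
  rwa [← isRoot_cyclotomic_prime_pow_mul_iff_of_charP (k := k), IsRoot.def,
    ← eq_intCast (Int.castRingHom (ZMod p)), cyclotomic.eval_apply, eq_intCast,
    ZMod.intCast_zmod_eq_zero_iff_dvd]

theorem Polynomial.sq_not_dvd_cyclotomic_eval {n p : ℕ} (hp : p.Prime) (hpn : p ∣ n) (hn : 2 < n)
    (a : ℤ) : ¬ (p : ℤ) ^ 2 ∣ (cyclotomic n ℤ).eval a := by
  intro hsq
  have := Fact.mk hp
  obtain ⟨k, m, hpm, rfl⟩ := Nat.exists_eq_pow_mul_and_not_dvd (n := n) (by omega) p hp.ne_one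
  obtain ⟨j, rfl⟩ : ∃ j, k = j + 1 :=
    ⟨k - 1, by rcases k with _ | k <;> simp_all⟩
  have hm : 0 < m := Nat.pos_of_ne_zero (by rintro rfl; simp at hn)
  have hroot := isPrimitiveRoot_of_dvd_cyclotomic_eval hpm ((dvd_pow_self _ two_ne_zero).trans hsq)
  set b := a ^ (p ^ j * m)
  -- `Φ_n(a)` divides `(a ^ n - 1) / (a ^ (n / p) - 1) = 1 + b + ⋯ + b ^ (p - 1)`
  have hgeom : (p : ℤ) ^ 2 ∣ ∑ i ∈ range p, b ^ i := by
    have hdvd := cyclotomic_mul_dvd_geom_sum (R := ℤ) (Nat.mul_pos (pow_pos hp.pos j) hm)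
      hp.one_lt
    rw [show p ^ j * m * p = p ^ (j + 1) * m by ring] at hdvd
    simpa [eval_finsetSum] using hsq.trans (eval_dvd (x := a) hdvd)
  rcases hp.eq_two_or_odd' with rfl | hodd
  · -- modulo 2 the only root of unity is 1, so `n = 2 ^ (j + 1)` and `b` is an odd square
    have ha : Odd a := by
      rw [← Int.not_even_iff_odd, ← ZMod.intCast_eq_zero_iff_even]
      intro h0
      simpa [h0, zero_pow hm.ne'] using hroot.pow_eq_one
    obtain rfl : m = 1 :=
      Nat.dvd_one.1 (hroot.dvd_of_pow_eq_one 1 (by simp [ZMod.intCast_eq_one_iff_odd.2 ha]))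
    rcases j with _ | i
    · norm_num at hn
    have hb : b % 4 = 1 := by
      rw [show b = (a ^ 2 ^ i) ^ 2 by rw [← pow_mul, ← pow_succ, ← mul_one (2 ^ (i + 1))]]
      exact Int.sq_mod_four_eq_one_of_odd ha.pow
    simp only [sum_range_succ, range_zero, sum_empty, pow_zero, pow_one] at hgeom
    omega
  · refine Int.sq_not_dvd_geom_sum_of_odd_prime hp hodd ?_ hgeom
    rw [← ZMod.intCast_eq_intCast_iff_dvd_sub]
    push_cast [b]
    rw [pow_mul', hroot.pow_eq_one, one_pow]

lemma Nat.dvd_of_dvd_cyclotomic_eval {n R : ℕ} (hn : 2 < n) {a : ℤ}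
    (hR : (R : ℤ) ∣ (cyclotomic n ℤ).eval a) (hRn : ∀ p, p.Prime → p ∣ R → p ∣ n) : R ∣ n := by
  have hsf : Squarefree R := Nat.squarefree_iff_prime_squarefree.2 fun p hp hpp ↦
    sq_not_dvd_cyclotomic_eval hp (hRn p hp (dvd_of_mul_left_dvd hpp)) hn a
      (dvd_trans (by exact_mod_cast pow_two p ▸ hpp) hR)
  rw [← prod_primeFactors_of_squarefree hsf, prod_primeFactors_dvd_iff (by omega)]
  exact fun p hp ↦ mem_primeFactors.2 ⟨prime_of_mem_primeFactors hp,
    hRn p (prime_of_mem_primeFactors hp) (dvd_of_mem_primeFactors hp), by omega⟩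

theorem coprime_part_cyclotomic_lower_bound_general (n : ℕ) (hn : 3 ≤ n) (a : ℤ) (ha : 1 < a)
    (P R : ℕ) (hfact : (Polynomial.cyclotomic n ℤ).eval a = (P : ℤ) * R)
    (hR : ∀ p : ℕ, p.Prime → p ∣ R → p ∣ n) :
    (P : ℝ) > 2 ^ (Real.sqrt ((n : ℝ) / 2) - Real.logb 2 n - 2) := by
  have hn0 : (0 : ℝ) < n := by positivity
  have hRn : (R : ℝ) ≤ n := Nat.cast_le.2 <| Nat.le_of_dvd (by omega) <|
    Nat.dvd_of_dvd_cyclotomic_eval (by omega) ⟨P, by rw [hfact, mul_comm]⟩ hR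
  have hPR : (P : ℝ) * R = (cyclotomic n ℝ).eval (a : ℝ) := by
    have := cyclotomic.eval_apply a n (Int.castRingHom ℝ)
    rw [eq_intCast, eq_intCast] at this
    rw [this, hfact]
    push_cast; ring
  have hΦ : (2 : ℝ) ^ φ n / 4 < (cyclotomic n ℝ).eval (a : ℝ) := by
    have h2a : (2 : ℝ) ≤ a := by exact_mod_cast ha
    calc (2 : ℝ) ^ φ n / 4 ≤ (a : ℝ) ^ φ n / 4 := by gcongr
      _ < _ := pow_totient_div_four_lt_cyclotomic_eval h2a (by omega)
  calc (2 : ℝ) ^ (√((n : ℝ) / 2) - Real.logb 2 n - 2) = 2 ^ √((n : ℝ) / 2) / n / 4 := by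
        rw [Real.rpow_sub two_pos, Real.rpow_sub two_pos, Real.rpow_logb two_pos (by norm_num) hn0,
          Real.rpow_two]
        norm_num
    _ ≤ 2 ^ φ n / n / 4 := by
        gcongr
        exact_mod_cast Real.rpow_le_rpow_of_exponent_le one_le_two (Nat.sqrt_div_two_le_totient n)
    _ < P := by
        rw [div_div, div_lt_iff₀ (by positivity)]
        nlinarith

theorem coprime_part_cyclotomic_lower_bound (n : ℕ) (hn : 3 ≤ n) (a : ℤ) (ha : 1 < a)
    (P R : ℕ) (hfact : (Polynomial.cyclotomic n ℤ).eval a = (P : ℤ) * R)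
    (hP : Nat.Coprime P n) (hR : ∀ p : ℕ, p.Prime → p ∣ R → p ∣ n) :
    (P : ℝ) > 2 ^ (Real.sqrt ((n : ℝ) / 2) - Real.logb 2 n - 2) :=
  coprime_part_cyclotomic_lower_bound_general n hn a ha P R hfact hR
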